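/- (1) For every partition 𝒦 of G into G-invariant subsets, Clpt(Irpt(𝒦)) ≼ 𝒦. (2) For every partition 𝒳 of Irr(G), Irpt(Clpt(𝒳)) ≼ 𝒳. -/

import Mathlib

open scoped BigOperators

noncomputable section

/-- `χ` is an irreducible complex character of `G`. -/
def IsIrrChar (G : Type) [Group G] [Fintype G] (χ : G → ℂ) : Prop :=
  ∃ V : FDRep ℂ G, CategoryTheory.Simple V ∧ χ = FDRep.character V

/-- The type of irreducible complex characters of `G` (denoted `Irr G`). -/
abbrev IrrChar (G : Type) [Group G] [Fintype G] := {χ : G → ℂ // IsIrrChar G χ}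

variable (G : Type) [Group G] [Fintype G]

/-- `σ_X = ∑_{χ ∈ X} χ(1)·χ`. -/
def sigmaChar (X : Set (IrrChar G)) : G → ℂ :=
  fun g => ∑ᶠ χ ∈ X, χ.1 1 * χ.1 g

/-- A subset of `G` is `G`-invariant if it is closed under conjugation. -/
def GInv (K : Set G) : Prop := ∀ g x : G, x ∈ K → g * x * g⁻¹ ∈ K

/-- `Clpt 𝒳`: the partition of `G` into equivalence classes of
`g ~ h ↔ σ_X(g) = σ_X(h)` for all `X ∈ 𝒳`. -/
def Clpt (𝒳 : Set (Set (IrrChar G))) : Set (Set G) :=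
  {C | ∃ g : G, C = {h : G | ∀ X ∈ 𝒳, sigmaChar G X h = sigmaChar G X g}}

/-- `χ(K̂) = ∑_{g ∈ K} χ(g)`. -/
def charSum (χ : G → ℂ) (K : Set G) : ℂ := ∑ᶠ g ∈ K, χ g

/-- `Irpt 𝒦`: the partition of `Irr G` into equivalence classes of
`χ ~ ψ ↔ χ(K̂)/χ(1) = ψ(K̂)/ψ(1)` for all `K ∈ 𝒦`. -/
def Irpt (𝒦 : Set (Set G)) : Set (Set (IrrChar G)) :=
  {Y | ∃ χ : IrrChar G, Y = {ψ : IrrChar G |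
      ∀ K ∈ 𝒦, charSum G ψ.1 K / ψ.1 1 = charSum G χ.1 K / χ.1 1}}

/-- `P` refines `Q` (`P ≼ Q`): every block of `P` is contained in a block of `Q`. -/
def Refines {α : Type} (P Q : Set (Set α)) : Prop :=
  ∀ A ∈ P, ∃ B ∈ Q, A ⊆ B

/-- `(𝒳, 𝒦)` is a supercharacter theory of `G`. -/
def IsSCT (𝒳 : Set (Set (IrrChar G))) (𝒦 : Set (Set G)) : Prop :=
  Setoid.IsPartition 𝒳 ∧ Setoid.IsPartition 𝒦 ∧ (∀ K ∈ 𝒦, GInv G K) ∧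
    𝒳.ncard = 𝒦.ncard ∧
    ∀ X ∈ 𝒳, ∀ K ∈ 𝒦, ∀ g ∈ K, ∀ h ∈ K, sigmaChar G X g = sigmaChar G X h

/-- `K̂ = ∑_{g ∈ K} g` in the group algebra. -/
def khat (K : Set G) : MonoidAlgebra ℂ G := ∑ᶠ g ∈ K, MonoidAlgebra.single g (1 : ℂ)

/-- The central idempotent `e_χ = (χ(1)/|G|) ∑_g χ(g) g⁻¹`. -/
def centIdem (χ : G → ℂ) : MonoidAlgebra ℂ G :=
  (χ 1 / (Fintype.card G : ℂ)) • ∑ g : G, MonoidAlgebra.single g⁻¹ (χ g)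

/-- `e_X = ∑_{χ ∈ X} e_χ`. -/
def eIdem (X : Set (IrrChar G)) : MonoidAlgebra ℂ G := ∑ᶠ χ ∈ X, centIdem G χ.1

/-- The linear extension of `χ : G → ℂ` to the group algebra. -/
def charExt (χ : G → ℂ) (z : MonoidAlgebra ℂ G) : ℂ := ∑ g : G, z.coeff g * χ g

/-- The subalgebra of functions `S → F` constant on each block of `𝒦`. -/
def MapPart (F : Type) [Field F] {S : Type} (𝒦 : Set (Set S)) : Subalgebra F (S → F) where
  carrier := {f | ∀ K ∈ 𝒦, ∀ s ∈ K, ∀ t ∈ K, f s = f t}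
  mul_mem' := fun {f g} hf hg K hK s hs t ht => by
    simp only [Pi.mul_apply, hf K hK s hs t ht, hg K hK s hs t ht]
  one_mem' := fun K hK s hs t ht => rfl
  add_mem' := fun {f g} hf hg K hK s hs t ht => by
    simp only [Pi.add_apply, hf K hK s hs t ht, hg K hK s hs t ht]
  zero_mem' := fun K hK s hs t ht => rfl
  algebraMap_mem' := fun r K hK s hs t ht => rfl

/-- The partition of `S` determined by a subalgebra `A` of `S → F`:
`s ~ t ↔ f(s) = f(t)` for all `f ∈ A`. -/
def algPart (F : Type) [Field F] {S : Type} (A : Subalgebra F (S → F)) : Set (Set S) :=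
  {C | ∃ s : S, C = {t : S | ∀ f ∈ A, f t = f s}}


/-!
Both refinements come from expanding indicator functions in characters. For a
conjugation-invariant `K ⊆ G`, Schur's lemma (`K̂` acts on an irreducible module as the scalar
`χ(K̂)/χ(1)`) and the column orthogonality relation give
`|G| · 1_K(g) = ∑_χ conj(χ(K̂)/χ(1)) · χ(1) χ(g)`.
The coefficients are constant on the blocks of `Irpt 𝒦` when `K ∈ 𝒦`, so `1_K(g)` is a linear
combination of the values `σ_Y(g)`, `Y ∈ Irpt 𝒦`, and elements of one block of `Clpt (Irpt 𝒦)`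
lie in the same block of `𝒦`. Dually, row orthogonality gives
`|G| · 1_X(χ) = ∑_g conj(σ_X(g)) · χ(g)/χ(1)`, with coefficients constant on the blocks of
`Clpt 𝒳`. Column orthogonality needs the decomposition of the regular character,
`∑_χ χ(1) χ = |G| · 1_{1}`, which also shows that `Irr G` is finite.
-/

open CategoryTheory Module Representation ComplexConjugate

def fiberPartition {ι α β : Type*} (I : Set ι) (f : ι → α → β) : Set (Set α) :=
  {C | ∃ x, C = {y | ∀ i ∈ I, f i y = f i x}}

theorem isPartition_fiberPartition {ι α β : Type*} (I : Set ι) (f : ι → α → β) :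
    Setoid.IsPartition (fiberPartition I f) := by
  refine ⟨fun ⟨x, hx⟩ => (hx ▸ fun _ _ => rfl : x ∈ (∅ : Set α)), fun a => ?_⟩
  refine ⟨{y | ∀ i ∈ I, f i y = f i a}, ⟨⟨a, rfl⟩, fun _ _ => rfl⟩, ?_⟩
  rintro _ ⟨⟨x, rfl⟩, ha⟩
  ext y
  exact ⟨fun hy i hi => (hy i hi).trans (ha i hi).symm, fun hy i hi => (hy i hi).trans (ha i hi)⟩

theorem apply_eq_of_mem_fiberPartition {ι α β : Type*} {I : Set ι} {f : ι → α → β} {C : Set α}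
    (hC : C ∈ fiberPartition I f) {a b : α} (ha : a ∈ C) (hb : b ∈ C) {i : ι} (hi : i ∈ I) :
    f i a = f i b := by
  obtain ⟨x, rfl⟩ := hC
  exact (ha i hi).trans (hb i hi).symm

theorem Setoid.IsPartition.sum_mul_eq_sum_mul {α R : Type*} [Fintype α]
    [NonUnitalNonAssocSemiring R] {P : Set (Set α)} (hP : Setoid.IsPartition P) {c u v : α → R}
    (hc : ∀ A ∈ P, ∀ a ∈ A, ∀ b ∈ A, c a = c b)
    (huv : ∀ A ∈ P, ∑ᶠ a ∈ A, u a = ∑ᶠ a ∈ A, v a) :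
    ∑ a, c a * u a = ∑ a, c a * v a := by
  have hsum (w : α → R) : ∑ a, w a = ∑ᶠ A ∈ P, ∑ᶠ a ∈ A, w a := by
    rw [← finsum_mem_sUnion hP.pairwiseDisjoint P.toFinite fun A _ => A.toFinite,
      hP.sUnion_eq_univ, finsum_mem_univ, finsum_eq_sum_of_fintype]
  rw [hsum, hsum]
  refine finsum_mem_congr rfl fun A hA => ?_
  obtain ⟨a₀, ha₀⟩ := Setoid.nonempty_of_mem_partition hP hA
  have hcA (w : α → R) : ∑ᶠ a ∈ A, c a * w a = c a₀ * ∑ᶠ a ∈ A, w a := by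
    rw [mul_finsum_mem' _ _ A.toFinite]
    exact finsum_mem_congr rfl fun a ha => by rw [hc A hA a ha a₀ ha₀]
  rw [hcA, hcA, huv A hA]

theorem refines_fiberPartition_of_indicator_eq_sum {ι α β γ : Type} [Fintype α] (I : Set ι)
    (f : ι → α → β) {Q : Set (Set γ)} (hQ : Setoid.IsPartition Q) (u : γ → α → ℂ)
    (S : Set α → γ → ℂ) (hS : ∀ A x, S A x = ∑ᶠ a ∈ A, u x a)
    (hexp : ∀ B ∈ Q, ∃ i ∈ I, ∃ φ : β → ℂ, ∀ x, B.indicator 1 x = ∑ a, φ (f i a) * u x a) :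
    Refines (fiberPartition (fiberPartition I f) S) Q := by
  rintro _ ⟨x, rfl⟩
  obtain ⟨B, ⟨hB, hxB⟩, -⟩ := hQ.2 x
  refine ⟨B, hB, fun y hy => ?_⟩
  obtain ⟨i, hi, φ, hφ⟩ := hexp B hB
  have hc : ∀ A ∈ fiberPartition I f, ∀ a ∈ A, ∀ b ∈ A, φ (f i a) = φ (f i b) :=
    fun A hA a ha b hb => by rw [apply_eq_of_mem_fiberPartition hA ha hb hi]
  have h := (hφ y).trans (((isPartition_fiberPartition I f).sum_mul_eq_sum_mul hc
    fun A hA => by rw [← hS, ← hS, hy A hA]).trans (hφ x).symm)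
  by_contra hyB
  simp [hxB, hyB] at h

theorem LinearMap.trace_eq_conj_trace_of_mul_eq_one {V : Type*} [AddCommGroup V] [Module ℂ V]
    [FiniteDimensional ℂ V] {A B : Module.End ℂ V} (hA : IsOfFinOrder A) (hBA : B * A = 1) :
    trace ℂ V B = conj (trace ℂ V A) := by
  have hcomm : Commute A B := (mul_eq_one_comm.mp hBA : A * B = 1).trans hBA.symm
  have hint := DirectSum.isInternal_submodule_of_iSupIndep_of_iSup_eq_top
    A.independent_maxGenEigenspace A.iSup_maxGenEigenspace_eq_top
  have hfin : {μ | A.maxGenEigenspace μ ≠ ⊥}.Finite :=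
    WellFoundedGT.finite_ne_bot_of_iSupIndep A.independent_maxGenEigenspace
  rw [trace_eq_sum_trace_restrict' hint hfin (A.mapsTo_maxGenEigenspace_of_comm rfl),
    trace_eq_sum_trace_restrict' hint hfin (A.mapsTo_maxGenEigenspace_of_comm hcomm), map_sum]
  refine Finset.sum_congr rfl fun μ hμ => ?_
  -- on the generalized `μ`-eigenspace `A` is `μ` plus a nilpotent, `B` is its inverse, and
  -- `μ` is a root of unity
  set AW := A.restrict (A.mapsTo_maxGenEigenspace_of_comm rfl μ)
  set BW := B.restrict (A.mapsTo_maxGenEigenspace_of_comm hcomm μ)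
  have hnil : IsNilpotent (AW - algebraMap ℂ _ μ) :=
    A.isNilpotent_restrict_maxGenEigenspace_sub_algebraMap μ
  have hAW : trace ℂ _ AW = μ * finrank ℂ (A.maxGenEigenspace μ) := by
    rw [← trace_one, ← trace_comp_eq_mul_of_commute_of_isNilpotent μ (Commute.one_left AW) hnil]
    rfl
  have hBW : (finrank ℂ (A.maxGenEigenspace μ) : ℂ) = μ * trace ℂ _ BW := by
    rw [← trace_comp_eq_mul_of_commute_of_isNilpotent μ (restrict_commute hcomm.symm _ _) hnil,
      ← trace_id]
    congr 1
    ext v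
    exact congr($hBA v.1).symm
  have hμ : μ ^ orderOf A = 1 := by
    obtain ⟨v, hv⟩ := (Module.End.HasUnifEigenvalue.lt zero_lt_one
      (hfin.mem_toFinset.mp hμ)).exists_hasUnifEigenvector
    have := hv.pow_apply (orderOf A)
    rw [pow_orderOf_eq_one, Module.End.one_apply] at this
    exact smul_left_injective ℂ hv.2 (this.symm.trans (one_smul ℂ v).symm)
  have hμ0 : μ ≠ 0 := by rintro rfl; simp [(orderOf_pos_iff.mpr hA).ne'] at hμ
  rw [hAW, map_mul, Complex.conj_natCast, ← Complex.inv_eq_conj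
    (Complex.norm_eq_one_of_pow_eq_one hμ (orderOf_pos_iff.mpr hA).ne'), hBW]
  field_simp

theorem Representation.character_eq_add_of_isCompl {k G V : Type*} [Field k] [Monoid G]
    [AddCommGroup V] [Module k V] [FiniteDimensional k V] {ρ : Representation k G V}
    {p q : Subrepresentation ρ} (h : IsCompl p q) :
    ρ.character = p.toRepresentation.character + q.toRepresentation.character := by
  have hpq : IsCompl p.toSubmodule q.toSubmodule :=
    ⟨disjoint_iff.mpr congr(($(disjoint_iff.mp h.1)).toSubmodule),
      codisjoint_iff.mpr congr(($(codisjoint_iff.mp h.2)).toSubmodule)⟩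
  have hint := (DirectSum.isInternal_submodule_iff_isCompl ![p.toSubmodule, q.toSubmodule]
    zero_ne_one (by ext i; fin_cases i <;> simp)).mpr hpq
  ext g
  have hmaps : ∀ i, Set.MapsTo (ρ g) (![p.toSubmodule, q.toSubmodule] i)
      (![p.toSubmodule, q.toSubmodule] i) := by
    intro i
    fin_cases i
    exacts [fun v hv => p.apply_mem_toSubmodule g hv, fun v hv => q.apply_mem_toSubmodule g hv]
  rw [character, LinearMap.trace_eq_sum_trace_restrict hint hmaps, Fin.sum_univ_two]
  rfl

theorem Representation.character_leftRegular {G : Type*} [Group G] [Fintype G] [DecidableEq G]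
    (g : G) : (leftRegular ℂ G).character g = if g = 1 then (Fintype.card G : ℂ) else 0 := by
  rw [character, LinearMap.trace_eq_matrix_trace ℂ (MonoidAlgebra.basis G ℂ), Matrix.trace]
  simp [LinearMap.toMatrix_apply, MonoidAlgebra.basis, Finsupp.single_apply]

theorem Representation.simple_of_isIrreducible {G V : Type} [Group G] [Fintype G]
    [AddCommGroup V] [Module ℂ V] [FiniteDimensional ℂ V] (ρ : Representation ℂ G V)
    [IsIrreducible ρ] : Simple (FDRep.of ρ) := by
  have := invertibleOfNonzero (NeZero.ne (Nat.card G : ℂ))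
  have h := char_orthonormal ρ ρ
  rw [if_pos ⟨Representation.Equiv.refl ρ⟩, inv_mul_eq_one₀ (NeZero.ne _)] at h
  rw [FDRep.simple_iff_char_is_norm_one, h]
  rfl

theorem Representation.exists_character_eq_sum_irrChar {G V : Type} [Group G] [Fintype G]
    [AddCommGroup V] [Module ℂ V] [FiniteDimensional ℂ V] (ρ : Representation ℂ G V) :
    ∃ s : Multiset (IrrChar G), ρ.character = (s.map Subtype.val).sum := by
  induction h : finrank ℂ V using Nat.strong_induction_on generalizing V with
  | _ n ih =>
  by_cases hbot : (⊥ : Subrepresentation ρ) = ⊤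
  · have : Subsingleton V := (Submodule.subsingleton_iff ℂ).mp
      (subsingleton_of_bot_eq_top congr(($hbot).toSubmodule))
    refine ⟨0, funext fun g => ?_⟩
    simp [character, Subsingleton.elim (ρ g) 0]
  by_cases hirr : IsIrreducible ρ
  · exact ⟨{⟨ρ.character, FDRep.of ρ, ρ.simple_of_isIrreducible, rfl⟩}, by simp⟩
  obtain ⟨p, hp_bot, hp_top⟩ : ∃ p : Subrepresentation ρ, p ≠ ⊥ ∧ p ≠ ⊤ := by
    by_contra! hp
    exact hirr { toNontrivial := ⟨⊥, ⊤, hbot⟩,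
                 eq_bot_or_eq_top := fun p => or_iff_not_imp_left.mpr (hp p) }
  obtain ⟨q, hpq⟩ := exists_isCompl p
  have hdim (r : Subrepresentation ρ) (hr : r ≠ ⊤) : finrank ℂ r.toSubmodule < n :=
    h ▸ Submodule.finrank_lt fun hr' => hr (Subrepresentation.toSubmodule_injective hr')
  obtain ⟨s, hs⟩ := ih _ (hdim p hp_top) p.toRepresentation rfl
  obtain ⟨t, ht⟩ := ih _ (hdim q fun hq => hp_bot (eq_bot_of_isCompl_top (hq ▸ hpq)))
    q.toRepresentation rfl
  exact ⟨s + t, by rw [character_eq_add_of_isCompl hpq, hs, ht, Multiset.map_add, Multiset.sum_add]⟩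

theorem FDRep.char_inv_eq_conj {G : Type} [Group G] [Finite G] (V : FDRep ℂ G) (g : G) :
    V.character g⁻¹ = conj (V.character g) :=
  LinearMap.trace_eq_conj_trace_of_mul_eq_one (V.ρ.isOfFinOrder (isOfFinOrder_of_finite g))
    (by rw [← map_mul, inv_mul_cancel, map_one])

theorem FDRep.sum_char_mul_mul_char_one {G : Type} [Group G] (V : FDRep ℂ G) [Simple V]
    (K : Finset G) (hK : ∀ h, ∀ x ∈ K, h * x * h⁻¹ ∈ K) (g : G) :
    (∑ k ∈ K, V.character (k * g)) * V.character 1 =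
      (∑ k ∈ K, V.character k) * V.character g := by
  set T : V →ₗ[ℂ] V := ∑ k ∈ K, V.ρ k
  have hT (h : G) : V.ρ h * T = T * V.ρ h := by
    simp only [T, Finset.mul_sum, Finset.sum_mul, ← map_mul]
    refine Finset.sum_nbij' (fun k => h * k * h⁻¹) (fun k => h⁻¹ * k * h) (fun k hk => hK h k hk)
      (fun k hk => ?_) (fun k _ => by group) (fun k _ => by group) (fun k _ => by group)
    simpa using hK h⁻¹ k hk
  let f : V ⟶ V := ⟨FGModuleCat.ofHom T, fun h => by ext v; exact congr($(hT h) v).symm⟩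
  obtain ⟨c, hc⟩ := endomorphism_simple_eq_smul_id ℂ f
  have hTc : T = c • LinearMap.id := congr(($hc).hom.hom.hom).symm
  have htrace (h : G) : ∑ k ∈ K, V.character (k * h) = c * V.character h := by
    simp only [character, map_mul, ← map_sum, ← Finset.sum_mul]
    change LinearMap.trace ℂ V (T * V.ρ h) = _
    rw [hTc, smul_mul_assoc, ← Module.End.one_eq_id, one_mul, map_smul, smul_eq_mul]
  have h1 := htrace 1
  simp only [mul_one] at h1
  rw [htrace, h1]
  ring

open Classical in
theorem FDRep.sum_char_mul_char_inv {G : Type} [Group G] [Fintype G] (V W : FDRep ℂ G)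
    [Simple V] [Simple W] :
    ∑ g, V.character g * W.character g⁻¹ =
      if Nonempty (V ≅ W) then (Fintype.card G : ℂ) else 0 := by
  have := invertibleOfNonzero (NeZero.ne (Nat.card G : ℂ))
  have h := char_orthonormal V W
  rw [inv_mul_eq_iff_eq_mul₀ (NeZero.ne _), Nat.card_eq_fintype_card] at h
  rw [h]
  split_ifs <;> simp

namespace IrrChar

variable {G}

theorem apply_one_ne_zero (χ : IrrChar G) : χ.1 1 ≠ 0 := by
  obtain ⟨V, hV, hχ⟩ := χ.2
  rw [hχ, FDRep.char_one, Nat.cast_ne_zero, Ne, finrank_zero_iff]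
  intro h
  exact id_nonzero V (by ext v; exact Subsingleton.elim _ _)

theorem conj_apply_one (χ : IrrChar G) : conj (χ.1 1) = χ.1 1 := by
  obtain ⟨V, -, hχ⟩ := χ.2
  rw [hχ, FDRep.char_one, Complex.conj_natCast]

theorem apply_inv (χ : IrrChar G) (g : G) : χ.1 g⁻¹ = conj (χ.1 g) := by
  obtain ⟨V, -, hχ⟩ := χ.2
  rw [hχ, FDRep.char_inv_eq_conj]

theorem sum_apply_mul_mul_apply_one (χ : IrrChar G) (K : Finset G)
    (hK : ∀ h, ∀ x ∈ K, h * x * h⁻¹ ∈ K) (g : G) :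
    (∑ k ∈ K, χ.1 (k * g)) * χ.1 1 = (∑ k ∈ K, χ.1 k) * χ.1 g := by
  obtain ⟨V, hV, hχ⟩ := χ.2
  rw [hχ]
  exact V.sum_char_mul_mul_char_one K hK g

theorem sum_apply_mul_apply_inv (χ ψ : IrrChar G) :
    ∑ g, χ.1 g * ψ.1 g⁻¹ = if χ = ψ then (Fintype.card G : ℂ) else 0 := by
  obtain ⟨V, hV, hχ⟩ := χ.2
  obtain ⟨W, hW, hψ⟩ := ψ.2
  rw [hχ, hψ, FDRep.sum_char_mul_char_inv]
  by_cases hVW : Nonempty (V ≅ W)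
  · rw [if_pos hVW, if_pos (Subtype.ext (by rw [hχ, hψ, FDRep.char_iso hVW.some]))]
  · rw [if_neg hVW, if_neg]
    intro h
    have h0 := FDRep.sum_char_mul_char_inv V W
    rw [if_neg hVW, show V.character = W.character by rw [← hχ, ← hψ, h],
      FDRep.sum_char_mul_char_inv, if_pos ⟨Iso.refl W⟩] at h0
    exact Fintype.card_ne_zero (by exact_mod_cast h0)

theorem exists_character_leftRegular_eq_sum :
    ∃ s : Multiset (IrrChar G), (leftRegular ℂ G).character = (s.map Subtype.val).sum ∧
      ∀ χ, (s.count χ : ℂ) = χ.1 1 := by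
  classical
  obtain ⟨s, hs⟩ := (leftRegular ℂ G).exists_character_eq_sum_irrChar
  refine ⟨s, hs, fun χ => ?_⟩
  have hreg : ∑ g, (leftRegular ℂ G).character g * χ.1 g⁻¹ = Fintype.card G * χ.1 1 := by
    simp [character_leftRegular]
  have hsum (t : Multiset (IrrChar G)) :
      ∑ g, (t.map Subtype.val).sum g * χ.1 g⁻¹ = t.count χ * Fintype.card G := by
    induction t using Multiset.induction_on with
    | empty => simp
    | cons ψ t ih =>
      simp only [Multiset.map_cons, Multiset.sum_cons, Pi.add_apply, add_mul,
        Finset.sum_add_distrib, ih, sum_apply_mul_apply_inv]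
      by_cases hψ : ψ = χ
      · simp [hψ, add_mul, add_comm]
      · simp [hψ, Multiset.count_cons_of_ne (Ne.symm hψ)]
  rw [hs, hsum, mul_comm] at hreg
  exact mul_left_cancel₀ (Nat.cast_ne_zero.mpr Fintype.card_ne_zero) hreg

instance : Finite (IrrChar G) := by
  obtain ⟨s, -, hs⟩ := exists_character_leftRegular_eq_sum (G := G)
  refine Finite.of_injective (β := s.toFinset) (fun χ => ⟨χ, ?_⟩) fun _ _ h =>
    congr_arg Subtype.val h
  refine Multiset.mem_toFinset.mpr (Multiset.count_pos.mp (Nat.pos_of_ne_zero fun h0 => ?_))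
  exact χ.apply_one_ne_zero (by rw [← hs, h0, Nat.cast_zero])

noncomputable instance : Fintype (IrrChar G) := Fintype.ofFinite _

theorem sum_apply_one_mul_apply [DecidableEq G] (g : G) :
    ∑ χ : IrrChar G, χ.1 1 * χ.1 g = if g = 1 then (Fintype.card G : ℂ) else 0 := by
  obtain ⟨s, hs, hcount⟩ := exists_character_leftRegular_eq_sum (G := G)
  have hsum (t : Multiset (IrrChar G)) : (t.map Subtype.val).sum g = ∑ χ, t.count χ * χ.1 g := by
    induction t using Multiset.induction_on with
    | empty => simp
    | cons ψ t ih => simp [Multiset.count_cons, add_mul, Finset.sum_add_distrib, ih, add_comm]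
  simp_rw [← character_leftRegular, hs, hsum, hcount]

theorem sum_charSum_mul_apply_inv {K : Set G} (hK : GInv G K) (g : G) :
    ∑ χ : IrrChar G, charSum G χ.1 K * χ.1 g⁻¹ = Fintype.card G * K.indicator 1 g := by
  classical
  have hKf : ∀ h, ∀ x ∈ K.toFinset, h * x * h⁻¹ ∈ K.toFinset := fun h x hx =>
    Set.mem_toFinset.mpr (hK h x (Set.mem_toFinset.mp hx))
  simp only [charSum, finsum_mem_eq_toFinset_sum]
  calc ∑ χ : IrrChar G, (∑ k ∈ K.toFinset, χ.1 k) * χ.1 g⁻¹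
      = ∑ χ : IrrChar G, (∑ k ∈ K.toFinset, χ.1 (k * g⁻¹)) * χ.1 1 :=
        Finset.sum_congr rfl fun χ _ => (sum_apply_mul_mul_apply_one χ _ hKf g⁻¹).symm
    _ = ∑ k ∈ K.toFinset, ∑ χ : IrrChar G, χ.1 1 * χ.1 (k * g⁻¹) := by
        simp only [Finset.sum_mul]
        rw [Finset.sum_comm]
        exact Finset.sum_congr rfl fun _ _ => Finset.sum_congr rfl fun _ _ => mul_comm _ _
    _ = ∑ k ∈ K.toFinset, if k = g then (Fintype.card G : ℂ) else 0 := by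
        simp [sum_apply_one_mul_apply, mul_inv_eq_one]
    _ = Fintype.card G * K.indicator 1 g := by
        simp [Set.indicator_apply]

theorem indicator_eq_sum_conj_charSum {K : Set G} (hK : GInv G K) (g : G) :
    K.indicator 1 g =
      ∑ χ : IrrChar G, conj (charSum G χ.1 K / χ.1 1) / Fintype.card G * (χ.1 1 * χ.1 g) := by
  have h := congr_arg conj (sum_charSum_mul_apply_inv hK g)
  simp only [map_sum, map_mul, apply_inv, Complex.conj_conj, Complex.conj_natCast] at h
  have hind : conj (K.indicator 1 g) = K.indicator (1 : G → ℂ) g := by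
    by_cases hg : g ∈ K <;> simp [hg]
  have hterm (χ : IrrChar G) : conj (charSum G χ.1 K / χ.1 1) / Fintype.card G * (χ.1 1 * χ.1 g) =
      conj (charSum G χ.1 K) * χ.1 g / Fintype.card G := by
    rw [map_div₀, conj_apply_one]
    field_simp [χ.apply_one_ne_zero]
  rw [Finset.sum_congr rfl fun χ _ => hterm χ, ← Finset.sum_div, h, hind]
  field_simp [Fintype.card_ne_zero]

theorem sum_conj_sigmaChar_mul_apply (X : Set (IrrChar G)) (χ : IrrChar G) :
    ∑ g, conj (sigmaChar G X g) * χ.1 g = Fintype.card G * χ.1 1 * X.indicator 1 χ := by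
  classical
  simp only [sigmaChar, finsum_mem_eq_toFinset_sum, map_sum, map_mul, ← apply_inv, inv_one,
    Finset.sum_mul]
  rw [Finset.sum_comm]
  have hψ (ψ : IrrChar G) :
      ∑ g, ψ.1 1 * ψ.1 g⁻¹ * χ.1 g = if ψ = χ then Fintype.card G * χ.1 1 else 0 := by
    simp_rw [mul_assoc, ← Finset.mul_sum, mul_comm (ψ.1 _), sum_apply_mul_apply_inv]
    split_ifs <;> simp_all
  rw [Finset.sum_congr rfl fun ψ _ => hψ ψ, Finset.sum_ite_eq', Set.indicator_apply]
  by_cases hχ : χ ∈ X <;> simp [hχ]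

theorem indicator_eq_sum_conj_sigmaChar (X : Set (IrrChar G)) (χ : IrrChar G) :
    X.indicator 1 χ = ∑ g, conj (sigmaChar G X g) / Fintype.card G * (χ.1 g / χ.1 1) := by
  have hterm (g : G) : conj (sigmaChar G X g) / Fintype.card G * (χ.1 g / χ.1 1) =
      conj (sigmaChar G X g) * χ.1 g / (Fintype.card G * χ.1 1) := by
    field_simp
  rw [Finset.sum_congr rfl fun g _ => hterm g, ← Finset.sum_div, sum_conj_sigmaChar_mul_apply]
  field_simp [Fintype.card_ne_zero, χ.apply_one_ne_zero]

end IrrChar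


/-- `Clpt (Irpt 𝒦) ≼ 𝒦` and `Irpt (Clpt 𝒳) ≼ 𝒳`. -/
theorem stmt10 (G : Type) [Group G] [Fintype G] :
    (∀ 𝒦 : Set (Set G), Setoid.IsPartition 𝒦 → (∀ K ∈ 𝒦, GInv G K) →
        Refines (Clpt G (Irpt G 𝒦)) 𝒦) ∧
    (∀ 𝒳 : Set (Set (IrrChar G)), Setoid.IsPartition 𝒳 →
        Refines (Irpt G (Clpt G 𝒳)) 𝒳) := by
  refine ⟨fun 𝒦 h𝒦 hinv => ?_, fun 𝒳 h𝒳 => ?_⟩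
  · exact refines_fiberPartition_of_indicator_eq_sum 𝒦 (fun K χ => charSum G χ.1 K / χ.1 1) h𝒦
      (fun g χ => χ.1 1 * χ.1 g) (sigmaChar G) (fun _ _ => rfl) fun K hK =>
        ⟨K, hK, fun z => conj z / Fintype.card G, IrrChar.indicator_eq_sum_conj_charSum (hinv K hK)⟩
  · exact refines_fiberPartition_of_indicator_eq_sum 𝒳 (sigmaChar G) h𝒳
      (fun χ g => χ.1 g / χ.1 1) (fun C χ => charSum G χ.1 C / χ.1 1)
      (fun C χ => by simp only [charSum, div_eq_mul_inv, finsum_mem_mul]) fun X hX =>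
        ⟨X, hX, fun z => conj z / Fintype.card G, IrrChar.indicator_eq_sum_conj_sigmaChar X⟩
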